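/- arXiv:2010.08475 — 7 statements merged into one kernel-verified Lean document; each statement's English description precedes it below -/
import Mathlib

section
/- For real numbers m ≥ 2, n ≥ 1, p ≥ 1, the constant functions f(r) = p/(m·n) and h(r) = 1 satisfy the system of equations -f''/f + (2m(m-1)n/p)·f'/h² + (2m²(m-1)n²/p²)·f²/h⁴ = λ/(2m) and -h''/h + (h'/h)² - (f'/f)(h'/h) + (2m(m-1)n/p)·f·h'/h³ - 2(mn/p)²·f²/h⁴ + 2m/h² = λ/(2m) with constant λ = 4m(m-1). -/
/-- The constant functions `f = p/(m n)`, `h = 1` solve the second-Chern-Einstein system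
with constant Chern-scalar curvature `λ = 4 m (m-1)`. -/
theorem stmt_0 (m n p : ℝ) (hm : 2 ≤ m) (hn : 1 ≤ n) (hp : 1 ≤ p)
    (f h : ℝ → ℝ) (hf : f = fun _ => p / (m * n)) (hh : h = fun _ => 1)
    (lam : ℝ) (hlam : lam = 4 * m * (m - 1)) :
    ∀ r : ℝ,
      (-(deriv (deriv f) r) / f r
        + (2 * m * (m - 1) * n / p) * deriv f r / (h r) ^ 2
        + (2 * m ^ 2 * (m - 1) * n ^ 2 / p ^ 2) * (f r) ^ 2 / (h r) ^ 4
        = lam / (2 * m)) ∧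
      (-(deriv (deriv h) r) / h r
        + (deriv h r / h r) ^ 2
        - (deriv f r / f r) * (deriv h r / h r)
        + (2 * m * (m - 1) * n / p) * f r * deriv h r / (h r) ^ 3
        - 2 * (m * n / p) ^ 2 * (f r) ^ 2 / (h r) ^ 4
        + 2 * m / (h r) ^ 2
        = lam / (2 * m)) := by
  have hm0 : m ≠ 0 := by linarith
  have hn0 : n ≠ 0 := by linarith
  have hp0 : p ≠ 0 := by linarith
  subst hf hh hlam
  intro r
  simp only [deriv_const', deriv_const]
  constructor <;> field_simp <;> ring
end

section
/- For m ≥ 2, the unique solution of the Cauchy problem t·u''(t) - m·u'(t) + 4m = 0, u(1) = 0, u'(1) = 4mn/p on [1, ∞) is u(t) = -4m(n+p)/(p(m+1)) + 4t + (4(mn-p)/(p(m+1)))·t^{m+1}; moreover, if n, p > 0 and mn ≥ p, then u(t) > 0 and u'(t) > 0 for all t > 1. -/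
/-- The explicit function `u(t) = -4m(n+p)/(p(m+1)) + 4t + (4(mn-p)/(p(m+1))) t^(m+1)`
is the unique solution on `[1,∞)` of `t u'' - m u' + 4m = 0`, `u(1) = 0`, `u'(1) = 4mn/p`;
moreover if `mn ≥ p` then `u > 0` and `u' > 0` on `(1,∞)`. -/
theorem stmt_4 (m : ℕ) (hm : 2 ≤ m) (n p : ℝ) (hn : 0 < n) (hp : 0 < p)
    (u : ℝ → ℝ)
    (hu : u = fun t => -(4 * m * (n + p)) / (p * (m + 1)) + 4 * t
        + (4 * (m * n - p) / (p * (m + 1))) * t ^ (m + 1)) :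
    (∀ t : ℝ, 1 ≤ t →
        t * deriv (deriv u) t - m * deriv u t + 4 * m = 0) ∧
    u 1 = 0 ∧ deriv u 1 = 4 * m * n / p ∧
    (∀ v : ℝ → ℝ, ContDiff ℝ (⊤ : ℕ∞) v →
        (∀ t : ℝ, 1 ≤ t → t * deriv (deriv v) t - m * deriv v t + 4 * m = 0) →
        v 1 = 0 → deriv v 1 = 4 * m * n / p →
        ∀ t : ℝ, 1 ≤ t → v t = u t) ∧
    (p ≤ m * n → ∀ t : ℝ, 1 < t → 0 < u t ∧ 0 < deriv u t) := by
  have hpm : (p * (m + 1)) ≠ 0 := by positivity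
  set A : ℝ := -(4 * m * (n + p)) / (p * (m + 1)) with hA
  set B : ℝ := 4 * (m * n - p) / (p * (m + 1)) with hB
  -- first derivative of u
  have hu1 : ∀ t : ℝ, HasDerivAt u (4 + B * (m + 1) * t ^ m) t := by
    intro t
    rw [hu]
    have h1 : HasDerivAt (fun t : ℝ => t ^ (m + 1)) ((m + 1) * t ^ m) t := by
      simpa using hasDerivAt_pow (m + 1) t
    have := (((hasDerivAt_id t).const_mul (4 : ℝ)).const_add A).add (h1.const_mul B)
    refine this.congr_deriv ?_
    push_cast
    ring
  have hderivu : deriv u = fun t => 4 + B * (m + 1) * t ^ m :=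
    funext fun t => (hu1 t).deriv
  -- second derivative of u
  have hu2 : ∀ t : ℝ, HasDerivAt (deriv u) (B * (m + 1) * (m * t ^ (m - 1))) t := by
    intro t
    rw [hderivu]
    have h1 : HasDerivAt (fun t : ℝ => t ^ m) (m * t ^ (m - 1)) t := hasDerivAt_pow m t
    have := (h1.const_mul (B * (m + 1))).const_add (4 : ℝ)
    convert this using 1
  have hderivu2 : deriv (deriv u) = fun t => B * (m + 1) * (m * t ^ (m - 1)) :=
    funext fun t => (hu2 t).deriv
  have hmm : m - 1 + 1 = m := Nat.succ_pred_eq_of_pos (Nat.lt_of_lt_of_le Nat.zero_lt_two hm)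
  have hpow : ∀ t : ℝ, t * t ^ (m - 1) = t ^ m := by
    intro t
    rw [mul_comm, ← pow_succ, hmm]
  -- ODE for u (holds everywhere)
  have hODEu : ∀ t : ℝ, t * deriv (deriv u) t - m * deriv u t + 4 * m = 0 := by
    intro t
    rw [hderivu2, hderivu]
    simp only
    linear_combination (B * ((m : ℝ) + 1) * (m : ℝ)) * hpow t
  have hu1v : u 1 = 0 := by
    rw [hu]; simp only [one_pow, mul_one]
    rw [hA, hB] at *
    field_simp
    ring
  have hdu1 : deriv u 1 = 4 * m * n / p := by
    rw [hderivu]; simp only [one_pow, mul_one]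
    rw [hB]
    field_simp
    ring
  refine ⟨fun t _ => hODEu t, hu1v, hdu1, ?_, ?_⟩
  · -- uniqueness
    intro v hv hODEv hv1 hdv1
    have hvdiff : Differentiable ℝ v := hv.differentiable (by simp)
    have hv2 : ContDiff ℝ ((⊤ : ℕ∞) : WithTop ℕ∞) v := hv.of_le (by simp)
    have hv' := (contDiff_infty_iff_deriv.mp hv2).2
    have hv'diff : Differentiable ℝ (deriv v) := hv'.differentiable (by simp)
    -- w = v' - u'
    set w : ℝ → ℝ := fun t => deriv v t - (4 + B * (m + 1) * t ^ m) with hw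
    set g : ℝ → ℝ := fun t => w t * (t ^ m)⁻¹ with hg
    have hwderiv : ∀ t : ℝ, HasDerivAt w
        (deriv (deriv v) t - B * (m + 1) * (m * t ^ (m - 1))) t := by
      intro t
      have h1 : HasDerivAt (deriv v) (deriv (deriv v) t) t :=
        (hv'diff t).hasDerivAt
      have h2 : HasDerivAt (fun t : ℝ => 4 + B * (m + 1) * t ^ m)
          (B * (m + 1) * (m * t ^ (m - 1))) t := by
        have := ((hasDerivAt_pow m t).const_mul (B * (m + 1))).const_add (4 : ℝ)
        convert this using 1
      exact h1.sub h2
    have hgderiv : ∀ t : ℝ, 1 ≤ t → HasDerivAt g 0 t := by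
      intro t ht
      have ht0 : (0 : ℝ) < t := lt_of_lt_of_le one_pos ht
      have htm : (t : ℝ) ^ m ≠ 0 := pow_ne_zero _ (ne_of_gt ht0)
      have hinv : HasDerivAt (fun t : ℝ => (t ^ m)⁻¹)
          (-(↑m * t ^ (m - 1)) / (t ^ m) ^ 2) t :=
        (hasDerivAt_pow m t).inv htm
      have hprod := (hwderiv t).mul hinv
      have key : t * (deriv (deriv v) t - B * (m + 1) * (m * t ^ (m - 1)))
          = m * w t := by
        have h1 := hODEv t ht
        have h2 := hODEu t
        rw [hderivu2, hderivu] at h2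
        simp only at h2
        simp only [hw]
        linear_combination h1 - h2
      refine hprod.congr_deriv (Eq.symm ?_)
      have hW2 : deriv (deriv v) t - B * ((m : ℝ) + 1) * ((m : ℝ) * t ^ (m - 1))
          = (m : ℝ) * w t / t := by
        rw [eq_div_iff (ne_of_gt ht0)]
        linear_combination key
      rw [hW2]
      rw [← hpow t]
      have hs : t ^ (m - 1) ≠ 0 := pow_ne_zero _ (ne_of_gt ht0)
      field_simp
      ring
    have hg1 : g 1 = 0 := by
      rw [hg, hw]
      simp only [one_pow, mul_one, inv_one]
      rw [hdv1, hB]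
      field_simp
      ring
    have hgzero : ∀ t : ℝ, 1 ≤ t → g t = 0 := by
      intro t ht
      have := constant_of_has_deriv_right_zero
        (f := g) (a := 1) (b := t)
        (fun x hx => ((hgderiv x hx.1).continuousAt).continuousWithinAt)
        (fun x hx => ((hgderiv x hx.1).hasDerivWithinAt))
        t ⟨ht, le_refl t⟩
      rw [this, hg1]
    have hwzero : ∀ t : ℝ, 1 ≤ t → w t = 0 := by
      intro t ht
      have ht0 : (0 : ℝ) < t := lt_of_lt_of_le one_pos ht
      have htm : (t : ℝ) ^ m ≠ 0 := pow_ne_zero _ (ne_of_gt ht0)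
      have := hgzero t ht
      rw [hg] at this
      simp only at this
      rcases mul_eq_zero.mp this with h | h
      · exact h
      · exact absurd (inv_eq_zero.mp h) htm
    -- now v - u is constant
    set W : ℝ → ℝ := fun t => v t - u t with hW
    have hWderiv : ∀ t : ℝ, 1 ≤ t → HasDerivAt W 0 t := by
      intro t ht
      have h1 : HasDerivAt v (deriv v t) t := (hvdiff t).hasDerivAt
      have := h1.sub (hu1 t)
      have hz := hwzero t ht
      rw [hw] at hz
      simp only at hz
      have he : deriv v t - (4 + B * (m + 1) * t ^ m) = 0 := hz
      rw [hW]
      refine this.congr_deriv (Eq.symm ?_)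
      linarith
    intro t ht
    have hW1 : W 1 = 0 := by rw [hW]; simp [hv1, hu1v]
    have := constant_of_has_deriv_right_zero
      (f := W) (a := 1) (b := t)
      (fun x hx => ((hWderiv x hx.1).continuousAt).continuousWithinAt)
      (fun x hx => ((hWderiv x hx.1).hasDerivWithinAt))
      t ⟨ht, le_refl t⟩
    rw [hW1] at this
    have : v t - u t = 0 := this
    linarith
  · -- positivity
    intro hpn t ht
    have ht0 : (0 : ℝ) < t := lt_trans one_pos ht
    have hB0 : 0 ≤ B := by
      rw [hB]
      have : (0:ℝ) ≤ m * n - p := by linarith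
      positivity
    have htm1 : (1 : ℝ) ≤ t ^ (m + 1) := one_le_pow₀ (le_of_lt ht)
    have htm : (0 : ℝ) < t ^ m := pow_pos ht0 m
    constructor
    · have hval : u t = A + 4 * t + B * t ^ (m + 1) := by rw [hu]
      have h1 : A + 4 + B = 0 := by
        have := hu1v
        rw [hu] at this
        simpa using this
      have : u t = 4 * (t - 1) + B * (t ^ (m + 1) - 1) := by
        rw [hval]; linarith
      rw [this]
      nlinarith
    · rw [hderivu]
      simp only
      have hmr : (0:ℝ) ≤ (m:ℝ) := Nat.cast_nonneg m
      have h1 : 0 ≤ B * ((m:ℝ) + 1) * t ^ m :=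
        mul_nonneg (mul_nonneg hB0 (by linarith)) htm.le
      linarith
end

section
/- Let m ≥ 2 and c ∈ ℝ. A smooth positive increasing function φ satisfying φ'(r) = √(u(φ(r))) solves φ²·φ'''/φ' + (m+2)·φ·φ'' - m(m-1)·(φ')² + (c/2)·φ² - 2m(m-1) = 0 whenever u satisfies the linear ODE t²·u''(t) + (m+2)·t·u'(t) - 2m(m-1)·u(t) + c·t² - 4m(m-1) = 0 at every point t in the range of φ and u∘φ > 0. -/
/-- The substitution `φ' = √(u ∘ φ)` transforms the Euler-type linear ODE for `u`
into the third-order constant Chern-scalar curvature ODE for `φ`. -/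
theorem stmt_6 (m c : ℝ) (hm : 2 ≤ m)
    (u φ : ℝ → ℝ) (hu : ContDiff ℝ (⊤ : ℕ∞) u) (hφ : ContDiff ℝ (⊤ : ℕ∞) φ)
    (hφpos : ∀ r : ℝ, 0 < φ r) (hφmono : StrictMono φ)
    (hode : ∀ r : ℝ, deriv φ r = Real.sqrt (u (φ r)))
    (huode : ∀ t ∈ Set.range φ,
        t ^ 2 * deriv (deriv u) t + (m + 2) * t * deriv u t
          - 2 * m * (m - 1) * u t + c * t ^ 2 - 4 * m * (m - 1) = 0)
    (huφpos : ∀ r : ℝ, 0 < u (φ r)) :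
    ∀ r : ℝ,
      (φ r) ^ 2 * deriv (deriv (deriv φ)) r / deriv φ r
        + (m + 2) * φ r * deriv (deriv φ) r
        - m * (m - 1) * (deriv φ r) ^ 2
        + (c / 2) * (φ r) ^ 2 - 2 * m * (m - 1) = 0 := by
  intro r
  have hsq : ∀ s : ℝ, 0 < Real.sqrt (u (φ s)) := fun s => Real.sqrt_pos.mpr (huφpos s)
  have hφd : ∀ s : ℝ, HasDerivAt φ (Real.sqrt (u (φ s))) s := by
    intro s
    have := (hφ.differentiable (by simp) s).hasDerivAt
    rwa [hode s] at this
  have hud : ∀ t : ℝ, HasDerivAt u (deriv u t) t :=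
    fun t => (hu.differentiable (by simp) t).hasDerivAt
  have hu' : ContDiff ℝ (⊤ : ℕ∞) (deriv u) := (contDiff_infty_iff_deriv.mp (hu.of_le (by simp))).2
  have hud' : ∀ t : ℝ, HasDerivAt (deriv u) (deriv (deriv u) t) t :=
    fun t => (hu'.differentiable (by simp) t).hasDerivAt
  -- second derivative of φ
  have h2 : ∀ s : ℝ, HasDerivAt (deriv φ) (deriv u (φ s) / 2) s := by
    intro s
    have hcomp : HasDerivAt (fun x => u (φ x))
        (deriv u (φ s) * Real.sqrt (u (φ s))) s := (hud (φ s)).comp s (hφd s)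
    have hsqrt : HasDerivAt (fun x => Real.sqrt (u (φ x)))
        ((1 / (2 * Real.sqrt (u (φ s)))) * (deriv u (φ s) * Real.sqrt (u (φ s)))) s :=
      (Real.hasDerivAt_sqrt (huφpos s).ne').comp s hcomp
    have heq : deriv φ = fun x => Real.sqrt (u (φ x)) := funext hode
    rw [heq]
    convert hsqrt using 1
    field_simp [(hsq s).ne']
  -- third derivative of φ
  have h3 : HasDerivAt (deriv (deriv φ))
      (deriv (deriv u) (φ r) * Real.sqrt (u (φ r)) / 2) r := by
    have heq : deriv (deriv φ) = fun x => deriv u (φ x) / 2 :=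
      funext fun s => (h2 s).deriv
    rw [heq]
    exact (((hud' (φ r)).comp r (hφd r)).div_const 2)
  have e1 : deriv φ r = Real.sqrt (u (φ r)) := hode r
  have e2 : deriv (deriv φ) r = deriv u (φ r) / 2 := (h2 r).deriv
  have e3 : deriv (deriv (deriv φ)) r
      = deriv (deriv u) (φ r) * Real.sqrt (u (φ r)) / 2 := h3.deriv
  have hsqr : Real.sqrt (u (φ r)) ^ 2 = u (φ r) := Real.sq_sqrt (huφpos r).le
  have hmain := huode (φ r) ⟨r, rfl⟩
  rw [e1, e2, e3, hsqr]
  have hdiv : φ r ^ 2 * (deriv (deriv u) (φ r) * Real.sqrt (u (φ r)) / 2) / Real.sqrt (u (φ r))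
      = φ r ^ 2 * deriv (deriv u) (φ r) / 2 := by
    field_simp [(hsq r).ne']
  rw [hdiv]
  linarith [hmain]
end

section
/- Let m ≥ 2 be an integer, c ≤ 0, and let u : [1, ∞) → ℝ be a smooth solution of t²·u''(t) + (m+2)·t·u'(t) - 2m(m-1)·u(t) + c·t² - 4m(m-1) = 0 with u(1) = 0 and u'(1) > 0. Then u(t) > 0 and u'(t) > 0 for all t > 1. -/
/-- Positivity of the solution to the constant Chern-scalar curvature ODE on `[1,∞)`
for `c ≤ 0`: `u > 0` and `u' > 0` beyond `t = 1`. -/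
theorem stmt_10 (m : ℕ) (hm : 2 ≤ m) (c : ℝ) (hc : c ≤ 0)
    (u : ℝ → ℝ) (hu : ContDiff ℝ (⊤ : ℕ∞) u)
    (hode : ∀ t : ℝ, 1 ≤ t →
      t ^ 2 * deriv (deriv u) t + ((m : ℝ) + 2) * t * deriv u t
        - 2 * m * ((m : ℝ) - 1) * u t + c * t ^ 2 - 4 * m * ((m : ℝ) - 1) = 0)
    (hu1 : u 1 = 0) (hu'1 : 0 < deriv u 1) :
    ∀ t : ℝ, 1 < t → 0 < u t ∧ 0 < deriv u t := by
  have hm' : (2 : ℝ) ≤ (m : ℝ) := by exact_mod_cast hm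
  have hu' : ContDiff ℝ (⊤ : ℕ∞) u := hu.of_le (by simp)
  have hvc : Continuous (deriv u) := hu'.continuous_deriv (by simp)
  have hwc : Continuous (deriv (deriv u)) :=
    ((contDiff_infty_iff_deriv.mp hu').2).continuous_deriv (by simp)
  -- main claim: deriv u > 0 beyond 1
  have key : ∀ t : ℝ, 1 < t → 0 < deriv u t := by
    by_contra h
    push_neg at h
    obtain ⟨t₁, ht₁, hvt₁⟩ := h
    set S : Set ℝ := {t | 1 ≤ t} ∩ {t | deriv u t ≤ 0} with hS
    have hSc : IsClosed S :=
      (isClosed_le continuous_const continuous_id).inter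
        (isClosed_le hvc continuous_const)
    have hSne : S.Nonempty := ⟨t₁, le_of_lt ht₁, hvt₁⟩
    have hSbd : BddBelow S := ⟨1, fun x hx => hx.1⟩
    set t₀ := sInf S with ht₀
    have ht₀S : t₀ ∈ S := hSc.csInf_mem hSne hSbd
    have h1t₀ : 1 < t₀ := by
      rcases lt_or_eq_of_le (show (1:ℝ) ≤ t₀ from ht₀S.1) with h | h
      · exact h
      · exfalso
        have h2 : deriv u t₀ ≤ 0 := ht₀S.2
        rw [← h] at h2
        linarith
    have hpos : ∀ s : ℝ, 1 < s → s < t₀ → 0 < deriv u s := by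
      intro s hs1 hst
      by_contra hns
      exact absurd (csInf_le hSbd ⟨le_of_lt hs1, le_of_not_gt hns⟩) (not_le.mpr hst)
    -- u is strictly increasing on [1, t₀]
    have hmono : StrictMonoOn u (Set.Icc 1 t₀) := by
      apply strictMonoOn_of_deriv_pos (convex_Icc 1 t₀) hu.continuous.continuousOn
      intro x hx
      rw [interior_Icc] at hx
      exact hpos x hx.1 hx.2
    have hut₀ : 0 < u t₀ := by
      have := hmono (Set.left_mem_Icc.mpr (le_of_lt h1t₀))
        (Set.right_mem_Icc.mpr (le_of_lt h1t₀)) h1t₀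
      rwa [hu1] at this
    -- ODE forces deriv (deriv u) t₀ > 0
    have hode₀ := hode t₀ (le_of_lt h1t₀)
    have hw₀ : 0 < deriv (deriv u) t₀ := by
      have ht₀pos : (0:ℝ) < t₀ := lt_trans one_pos h1t₀
      have hvt₀ : deriv u t₀ ≤ 0 := ht₀S.2
      nlinarith [mul_nonneg (mul_nonneg (by linarith : (0:ℝ) ≤ (m:ℝ) + 2) ht₀pos.le)
          (neg_nonneg.mpr hvt₀), mul_pos ht₀pos ht₀pos,
        mul_nonneg (neg_nonneg.mpr hc) (mul_pos ht₀pos ht₀pos).le,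
        mul_pos (mul_pos (by linarith : (0:ℝ) < 2 * (m:ℝ)) (by linarith : (0:ℝ) < (m:ℝ) - 1)) hut₀]
    -- continuity: deriv (deriv u) > 0 on a ball around t₀
    have hopen : IsOpen {x : ℝ | 0 < deriv (deriv u) x} := isOpen_lt continuous_const hwc
    obtain ⟨δ, hδ, hball⟩ := Metric.isOpen_iff.mp hopen t₀ hw₀
    set s := max ((1 + t₀) / 2) (t₀ - δ / 2) with hs
    have hs1 : 1 < s := lt_max_of_lt_left (by linarith)
    have hst : s < t₀ := max_lt (by linarith) (by linarith)
    have hsub : Set.Icc s t₀ ⊆ Metric.ball t₀ δ := by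
      intro x hx
      rw [Metric.mem_ball, Real.dist_eq, abs_sub_lt_iff]
      constructor
      · linarith [hx.2]
      · have : t₀ - δ / 2 ≤ s := le_max_right _ _
        have := hx.1
        linarith
    have hvmono : StrictMonoOn (deriv u) (Set.Icc s t₀) := by
      apply strictMonoOn_of_deriv_pos (convex_Icc s t₀) hvc.continuousOn
      intro x hx
      rw [interior_Icc] at hx
      exact hball (hsub ⟨hx.1.le, hx.2.le⟩)
    have : deriv u s < deriv u t₀ :=
      hvmono (Set.left_mem_Icc.mpr hst.le) (Set.right_mem_Icc.mpr hst.le) hst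
    have := hpos s hs1 hst
    have h3 : deriv u t₀ ≤ 0 := ht₀S.2
    linarith
  intro t ht
  refine ⟨?_, key t ht⟩
  have hmono : StrictMonoOn u (Set.Icc 1 t) := by
    apply strictMonoOn_of_deriv_pos (convex_Icc 1 t) hu.continuous.continuousOn
    intro x hx
    rw [interior_Icc] at hx
    exact key x hx.1
  have := hmono (Set.left_mem_Icc.mpr ht.le) (Set.right_mem_Icc.mpr ht.le) ht
  rwa [hu1] at this
end

section
/- Let m > 3 be an integer and n, p > 0. Define α(k) = -4m(m-3)(n+p)·k^{3m+2} + 4(m+1)((m-1)p + 2mn)·k^{3m} - 4(3m-1)(mn+p)·k^{2m+3} + 4(3m-1)(mn-p)·k^m + 4(m+1)((m-1)p - 2mn)·k³ - 4m(m-3)(p-n)·k. Then α(1) = α'(1) = α''(1) = 0 and α'''(1) = 8mn(3m-1)(m-3)(m-1)(m+1) > 0, and α(k) → -∞ as k → ∞; hence there exists k̃ > 1 with α(k) > 0 on (1, k̃) and α(k̃) = 0. -/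
/-!
Writing `α k = ∑ cᵢ k^{eᵢ}`, every iterated derivative at `k = 1` is the explicit sum
`∑ cᵢ eᵢ (eᵢ - 1) ⋯`, which gives the values of `α, α', α'', α'''` at `1`. Since `α` vanishes to
order three at `1` with `α'''(1) > 0`, integrating three times shows `α > 0` just to the right
of `1`. The negative leading coefficient makes `α → -∞`, so `α` has zeros beyond `1`, and the
infimum of those (away from `1`) is the first one.
-/

open Set Filter Topology Asymptotics Finset

section Monomials

variable {ι : Type*}

theorem iteratedDeriv_sum_const_mul_pow {𝕜 : Type*} [NontriviallyNormedField 𝕜]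
    (s : Finset ι) (c : ι → 𝕜) (e : ι → ℕ) (j : ℕ) (x : 𝕜) :
    iteratedDeriv j (fun k => ∑ i ∈ s, c i * k ^ e i) x
      = ∑ i ∈ s, c i * (∏ l ∈ range j, ((e i : 𝕜) - l)) * x ^ (e i - j) := by
  rw [iteratedDeriv_fun_sum fun i _ => by fun_prop]
  refine sum_congr rfl fun i _ => ?_
  rw [iteratedDeriv_const_mul_field, iteratedDeriv_eq_iterate, iter_deriv_pow, mul_assoc]

theorem tendsto_sum_const_mul_pow_atBot [DecidableEq ι] {s : Finset ι} {c : ι → ℝ}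
    {e : ι → ℕ} {i₀ : ι} (hi₀ : i₀ ∈ s) (hc : c i₀ < 0) (he₀ : e i₀ ≠ 0)
    (he : ∀ i ∈ s, i ≠ i₀ → e i < e i₀) :
    Tendsto (fun k => ∑ i ∈ s, c i * k ^ e i) atTop atBot := by
  have hlower : (fun k : ℝ => ∑ i ∈ s.erase i₀, c i * k ^ e i)
      =o[atTop] fun k => c i₀ * k ^ e i₀ := by
    refine (IsLittleO.fun_sum fun i hi => ?_).trans_isBigO (isBigO_self_const_mul hc.ne _ _)
    obtain ⟨hne, hmem⟩ := mem_erase.1 hi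
    exact (isLittleO_pow_pow_atTop_of_lt (he i hmem hne)).const_mul_left _
  have hequiv : (fun k : ℝ => c i₀ * k ^ e i₀) ~[atTop] fun k => ∑ i ∈ s, c i * k ^ e i := by
    refine (hlower.add_isEquivalent IsEquivalent.refl).symm.congr_right ?_
    exact .of_forall fun k => (add_comm _ _).trans (add_sum_erase s (fun i => c i * k ^ e i) hi₀)
  exact hequiv.tendsto_atBot (tendsto_neg_const_mul_pow_atTop he₀ hc)

end Monomials

section RightOfRoot

variable {f : ℝ → ℝ} {a : ℝ}

theorem eventually_pos_nhdsGT_of_deriv (hf : Differentiable ℝ f) (ha : f a = 0)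
    (h : ∀ᶠ x in 𝓝[>] a, 0 < deriv f x) : ∀ᶠ x in 𝓝[>] a, 0 < f x := by
  obtain ⟨b, hab, hb⟩ := mem_nhdsGT_iff_exists_Ioo_subset.1 h
  have hmono : StrictMonoOn f (Icc a b) :=
    strictMonoOn_of_deriv_pos (convex_Icc a b) hf.continuous.continuousOn
      fun x hx => hb (by rwa [interior_Icc] at hx)
  filter_upwards [Ioo_mem_nhdsGT hab] with x hx
  exact ha ▸ hmono (left_mem_Icc.2 hab.le) (Ioo_subset_Icc_self hx) hx.1

theorem eventually_pos_nhdsGT_of_iteratedDeriv (n : ℕ) (hf : ContDiff ℝ n f)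
    (hzero : ∀ j < n, iteratedDeriv j f a = 0) (hpos : 0 < iteratedDeriv n f a) :
    ∀ᶠ x in 𝓝[>] a, 0 < f x := by
  induction n generalizing f with
  | zero =>
    rw [iteratedDeriv_zero] at hpos
    exact nhdsWithin_le_nhds ((hf.continuous.tendsto a).eventually_const_lt hpos)
  | succ n ih =>
    rw [Nat.cast_succ] at hf
    obtain ⟨hdiff, -, hderiv⟩ := contDiff_succ_iff_deriv.1 hf
    refine eventually_pos_nhdsGT_of_deriv hdiff (by simpa using hzero 0 n.succ_pos) ?_
    refine ih hderiv (fun j hj => ?_) (by rwa [← iteratedDeriv_succ'])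
    rw [← iteratedDeriv_succ']
    exact hzero (j + 1) (by omega)

theorem exists_first_zero_of_eventually_pos (hf : Continuous f)
    (hpos : ∀ᶠ x in 𝓝[>] a, 0 < f x) (hneg : ∃ x, a < x ∧ f x ≤ 0) :
    ∃ b, a < b ∧ (∀ x, a < x → x < b → 0 < f x) ∧ f b = 0 := by
  obtain ⟨b₀, hab₀, hb₀⟩ := mem_nhdsGT_iff_exists_Ioo_subset.1 hpos
  set S := Ici b₀ ∩ f ⁻¹' Iic 0
  have hSne : S.Nonempty := by
    obtain ⟨x, hax, hx⟩ := hneg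
    exact ⟨x, not_lt.1 fun hxb => (hb₀ ⟨hax, hxb⟩ : 0 < f x).not_ge hx, hx⟩
  have hSbdd : BddBelow S := ⟨b₀, fun x hx => hx.1⟩
  have hbS : sInf S ∈ S := (isClosed_Ici.inter (isClosed_Iic.preimage hf)).csInf_mem hSne hSbdd
  have hab : a < sInf S := hab₀.trans_le hbS.1
  have hbefore : ∀ x, a < x → x < sInf S → 0 < f x := by
    intro x hax hxb
    rcases lt_or_ge x b₀ with hxb₀ | hxb₀
    · exact hb₀ ⟨hax, hxb₀⟩
    · exact not_le.1 fun hx => notMem_of_lt_csInf hxb hSbdd ⟨hxb₀, hx⟩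
  refine ⟨sInf S, hab, hbefore, le_antisymm hbS.2 ?_⟩
  refine ge_of_tendsto (hf.continuousWithinAt (s := Iio (sInf S))) ?_
  filter_upwards [Ioo_mem_nhdsLT hab] with x hx using (hbefore x hx.1 hx.2).le

end RightOfRoot

/-- Boundary-matching polynomial for `m > 3`: `α` vanishes to third order at `k = 1`,
has positive third derivative there, tends to `-∞`, hence has a first zero `k̃ > 1`
with `α > 0` on `(1, k̃)`. -/
theorem stmt_14 (m : ℕ) (hm : 3 < m) (n p : ℝ) (hn : 0 < n) (hp : 0 < p)
    (α : ℝ → ℝ)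
    (hα : α = fun k =>
        -4 * (m : ℝ) * ((m : ℝ) - 3) * (n + p) * k ^ (3 * m + 2)
        + 4 * ((m : ℝ) + 1) * (((m : ℝ) - 1) * p + 2 * m * n) * k ^ (3 * m)
        - 4 * (3 * (m : ℝ) - 1) * ((m : ℝ) * n + p) * k ^ (2 * m + 3)
        + 4 * (3 * (m : ℝ) - 1) * ((m : ℝ) * n - p) * k ^ m
        + 4 * ((m : ℝ) + 1) * (((m : ℝ) - 1) * p - 2 * m * n) * k ^ 3
        - 4 * (m : ℝ) * ((m : ℝ) - 3) * (p - n) * k) :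
    α 1 = 0 ∧ deriv α 1 = 0 ∧ deriv (deriv α) 1 = 0 ∧
    deriv (deriv (deriv α)) 1
      = 8 * m * n * (3 * (m : ℝ) - 1) * ((m : ℝ) - 3) * ((m : ℝ) - 1) * ((m : ℝ) + 1) ∧
    0 < 8 * (m : ℝ) * n * (3 * (m : ℝ) - 1) * ((m : ℝ) - 3) * ((m : ℝ) - 1) * ((m : ℝ) + 1) ∧
    Filter.Tendsto α Filter.atTop Filter.atBot ∧
    ∃ ktilde : ℝ, 1 < ktilde ∧ (∀ k : ℝ, 1 < k → k < ktilde → 0 < α k) ∧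
      α ktilde = 0 := by
  have hm' : (3 : ℝ) < m := by exact_mod_cast hm
  set c : Fin 6 → ℝ := ![-4 * m * (m - 3) * (n + p), 4 * (m + 1) * ((m - 1) * p + 2 * m * n),
    -4 * (3 * m - 1) * (m * n + p), 4 * (3 * m - 1) * (m * n - p),
    4 * (m + 1) * ((m - 1) * p - 2 * m * n), -4 * m * (m - 3) * (p - n)]
  set e : Fin 6 → ℕ := ![3 * m + 2, 3 * m, 2 * m + 3, m, 3, 1]
  have hα_sum : α = fun k => ∑ i, c i * k ^ e i := by
    subst hα; funext k
    simp only [Fin.sum_univ_succ, Fin.sum_univ_zero, c, e, Matrix.cons_val_zero,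
      Matrix.cons_val_succ]; ring
  obtain ⟨h0, h1, h2, h3⟩ : deriv^[0] α 1 = 0 ∧ deriv^[1] α 1 = 0 ∧ deriv^[2] α 1 = 0 ∧
      deriv^[3] α 1
        = 8 * m * n * (3 * (m : ℝ) - 1) * ((m : ℝ) - 3) * ((m : ℝ) - 1) * ((m : ℝ) + 1) := by
    simp only [← iteratedDeriv_eq_iterate, hα_sum, iteratedDeriv_sum_const_mul_pow, one_pow,
      mul_one]
    refine ⟨?_, ?_, ?_, ?_⟩ <;>
      simp only [Fin.sum_univ_succ, Fin.sum_univ_zero, prod_range_succ, prod_range_zero, c, e,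
        Matrix.cons_val_zero, Matrix.cons_val_succ] <;> push_cast <;> ring
  have hc3 : 0 < 8 * (m : ℝ) * n * (3 * (m : ℝ) - 1) * ((m : ℝ) - 3) * ((m : ℝ) - 1)
      * ((m : ℝ) + 1) :=
    mul_pos (mul_pos (mul_pos (mul_pos (mul_pos (by linarith) hn) (by linarith))
      (by linarith)) (by linarith)) (by linarith)
  have htend : Tendsto α atTop atBot := by
    rw [hα_sum]
    refine tendsto_sum_const_mul_pow_atBot (mem_univ 0) ?_ (by simp [e]) fun i _ hi => ?_
    · have : 0 < (m : ℝ) * (m - 3) * (n + p) :=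
        mul_pos (mul_pos (by linarith) (by linarith)) (add_pos hn hp)
      simp only [c, Matrix.cons_val_zero]
      linarith
    · fin_cases i <;> simp [e] at hi ⊢ <;> omega
  have hsmooth : ContDiff ℝ 3 α := by rw [hα_sum]; fun_prop
  have hnear : ∀ᶠ k in 𝓝[>] 1, 0 < α k := by
    refine eventually_pos_nhdsGT_of_iteratedDeriv 3 hsmooth (fun j hj => ?_)
      (by rw [iteratedDeriv_eq_iterate]; exact hc3.trans_eq h3.symm)
    rw [iteratedDeriv_eq_iterate]
    interval_cases j
    exacts [h0, h1, h2]
  obtain ⟨x, hx, hx1⟩ :=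
    ((htend.eventually (eventually_le_atBot 0)).and (eventually_gt_atTop 1)).exists
  exact ⟨h0, h1, h2, h3, hc3, htend,
    exists_first_zero_of_eventually_pos hsmooth.continuous hnear ⟨x, hx1, hx⟩⟩
end

section
/- For m ≥ 2 and k > 0, define on [0, π/2] the functions f(r) = (1/2)·sin(2r) and h_k(r) = cos(r)·√(sin²(r) + k²·cos²(r)), so that h_k(r)² = cos²(r)·(sin²(r) + k²·cos²(r)) for all r ∈ [0, π/2], and let φ_k(r) = k/(cos²(r) + k²·sin²(r)) be the conformal factor. Then the pair (f, h_k) solves the second-Chern-Einstein system with n = 1, p = m: -f''/f + 2(m-1)·f'/h_k² + 2(m-1)·f²/h_k⁴ = λ(r)/(2m) and -h_k''/h_k + (h_k'/h_k)² - (f'/f)(h_k'/h_k) + 2(m-1)·f·h_k'/h_k³ - 2·f²/h_k⁴ + 2m/h_k² = λ(r)/(2m) for a suitable smooth function λ. -/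
set_option maxHeartbeats 1000000 in
set_option maxRecDepth 10000 in
/-- On `ℂP^m` (n = 1, p = m): `f(r) = (1/2) sin 2r`, `h_k(r) = cos r · √(sin²r + k²cos²r)`
satisfy `h_k² = cos²r (sin²r + k²cos²r)` on `[0,π/2]` and, together with the conformal
factor `φ_k(r) = k/(cos²r + k² sin²r)`, solve the second-Chern-Einstein system on
`(0, π/2)` for a suitable smooth function `λ`. -/
theorem stmt_17 (m k : ℝ) (hm : 2 ≤ m) (hk : 0 < k)
    (f h φ : ℝ → ℝ)
    (hf : f = fun r => (1 / 2) * Real.sin (2 * r))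
    (hh : h = fun r => Real.cos r * Real.sqrt ((Real.sin r) ^ 2 + k ^ 2 * (Real.cos r) ^ 2))
    (hφ : φ = fun r => k / ((Real.cos r) ^ 2 + k ^ 2 * (Real.sin r) ^ 2)) :
    (∀ r ∈ Set.Icc (0 : ℝ) (Real.pi / 2),
        (h r) ^ 2 = (Real.cos r) ^ 2 * ((Real.sin r) ^ 2 + k ^ 2 * (Real.cos r) ^ 2)) ∧
    ∃ lam : ℝ → ℝ, ContDiffOn ℝ (⊤ : ℕ∞) lam (Set.Ioo (0 : ℝ) (Real.pi / 2)) ∧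
      ∀ r ∈ Set.Ioo (0 : ℝ) (Real.pi / 2),
        (-(deriv (deriv f) r) / f r
          + 2 * (m - 1) * deriv f r / (h r) ^ 2
          + 2 * (m - 1) * (f r) ^ 2 / (h r) ^ 4
          = lam r / (2 * m)) ∧
        (-(deriv (deriv h) r) / h r
          + (deriv h r / h r) ^ 2
          - (deriv f r / f r) * (deriv h r / h r)
          + 2 * (m - 1) * f r * deriv h r / (h r) ^ 3
          - 2 * (f r) ^ 2 / (h r) ^ 4
          + 2 * m / (h r) ^ 2
          = lam r / (2 * m)) := by
  have hQpos : ∀ r : ℝ, 0 < (Real.sin r) ^ 2 + k ^ 2 * (Real.cos r) ^ 2 := by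
    intro r
    nlinarith [Real.sin_sq_add_cos_sq r, mul_pos hk hk, sq_nonneg (Real.sin r),
      sq_nonneg (Real.cos r), sq_nonneg (k * Real.sin r), sq_nonneg (k ^ 2 * Real.cos r)]
  have hQne : ∀ r : ℝ, (Real.sin r) ^ 2 + k ^ 2 * (Real.cos r) ^ 2 ≠ 0 :=
    fun r => (hQpos r).ne'
  have hupos : ∀ r : ℝ, 0 < Real.sqrt ((Real.sin r) ^ 2 + k ^ 2 * (Real.cos r) ^ 2) :=
    fun r => Real.sqrt_pos.mpr (hQpos r)
  have hu2 : ∀ r : ℝ, (Real.sqrt ((Real.sin r) ^ 2 + k ^ 2 * (Real.cos r) ^ 2)) ^ 2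
      = (Real.sin r) ^ 2 + k ^ 2 * (Real.cos r) ^ 2 :=
    fun r => Real.sq_sqrt (hQpos r).le
  -- derivatives of f
  have h2r : ∀ r : ℝ, HasDerivAt (fun x : ℝ => 2 * x) 2 r := by
    intro r; simpa using (hasDerivAt_id r).const_mul 2
  have hfd : ∀ r : ℝ, HasDerivAt f (Real.cos (2 * r)) r := by
    intro r; rw [hf]
    have := (Real.hasDerivAt_sin (2 * r)).comp r (h2r r)
    exact (this.const_mul (1 / 2 : ℝ)).congr_deriv (by ring)
  have hdf : deriv f = fun r => Real.cos (2 * r) := funext fun r => (hfd r).deriv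
  have hfd2 : ∀ r : ℝ, deriv (deriv f) r = -(2 * Real.sin (2 * r)) := by
    intro r; rw [hdf]
    have := (Real.hasDerivAt_cos (2 * r)).comp r (h2r r)
    have h2 : HasDerivAt (fun r => Real.cos (2 * r)) (-(2 * Real.sin (2 * r))) r := by
      exact this.congr_deriv (by ring)
    exact h2.deriv
  -- derivative of Q
  have hQd : ∀ r : ℝ, HasDerivAt (fun x => (Real.sin x) ^ 2 + k ^ 2 * (Real.cos x) ^ 2)
      (2 * Real.sin r * Real.cos r * (1 - k ^ 2)) r := by
    intro r
    have h1 := (Real.hasDerivAt_sin r).pow 2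
    have h2 := ((Real.hasDerivAt_cos r).pow 2).const_mul (k ^ 2)
    exact (h1.add h2).congr_deriv (by ring)
  -- derivative of h
  have hhd : ∀ r : ℝ, HasDerivAt h
      (Real.sin r * ((Real.cos r) ^ 2 - (Real.sin r) ^ 2 - 2 * k ^ 2 * (Real.cos r) ^ 2)
        / Real.sqrt ((Real.sin r) ^ 2 + k ^ 2 * (Real.cos r) ^ 2)) r := by
    intro r
    have hs := (hQd r).sqrt (hQne r)
    have hp := (Real.hasDerivAt_cos r).mul hs
    rw [hh]
    refine hp.congr_deriv ?_
    have u2 := hu2 r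
    have une := (hupos r).ne'
    field_simp
    linear_combination (-Real.sin r) * u2
  have hdh : deriv h = fun r =>
      Real.sin r * ((Real.cos r) ^ 2 - (Real.sin r) ^ 2 - 2 * k ^ 2 * (Real.cos r) ^ 2)
        / Real.sqrt ((Real.sin r) ^ 2 + k ^ 2 * (Real.cos r) ^ 2) :=
    funext fun r => (hhd r).deriv
  -- second derivative of h
  have hhd2 : ∀ r : ℝ, deriv (deriv h) r =
      ((Real.cos r * ((Real.cos r) ^ 2 - (Real.sin r) ^ 2 - 2 * k ^ 2 * (Real.cos r) ^ 2)
          - 4 * (Real.sin r) ^ 2 * Real.cos r * (1 - k ^ 2))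
            * ((Real.sin r) ^ 2 + k ^ 2 * (Real.cos r) ^ 2)
        - (Real.sin r) ^ 2 * Real.cos r
            * ((Real.cos r) ^ 2 - (Real.sin r) ^ 2 - 2 * k ^ 2 * (Real.cos r) ^ 2) * (1 - k ^ 2))
        / (Real.sqrt ((Real.sin r) ^ 2 + k ^ 2 * (Real.cos r) ^ 2)) ^ 3 := by
    intro r
    rw [hdh]
    have hA : HasDerivAt (fun x => (Real.cos x) ^ 2 - (Real.sin x) ^ 2 - 2 * k ^ 2 * (Real.cos x) ^ 2)
        (-(4 * Real.sin r * Real.cos r * (1 - k ^ 2))) r := by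
      have h1 := (Real.hasDerivAt_cos r).pow 2
      have h2 := (Real.hasDerivAt_sin r).pow 2
      have h3 := ((Real.hasDerivAt_cos r).pow 2).const_mul (2 * k ^ 2)
      exact ((h1.sub h2).sub h3).congr_deriv (by ring)
    have hN := (Real.hasDerivAt_sin r).mul hA
    have hden := (hQd r).sqrt (hQne r)
    have hq := hN.div hden (hupos r).ne'
    have := hq.deriv
    simp only [Pi.mul_apply] at this
    refine this.trans ?_
    have u2 := hu2 r
    have une := (hupos r).ne'
    have hQr := hQne r
    set u := Real.sqrt ((Real.sin r) ^ 2 + k ^ 2 * (Real.cos r) ^ 2) with hudef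
    field_simp
    ring_nf
    linear_combination ((1)*(Real.cos r)^3 + (-2)*(Real.cos r)^3*k^2 + (-5)*(Real.sin r)^2*(Real.cos r) + (4)*(Real.sin r)^2*(Real.cos r)*k^2) * u2
  have hm0 : m ≠ 0 := by linarith
  refine ⟨?_, ?_⟩
  · intro r _
    rw [hh]
    dsimp only
    rw [mul_pow, Real.sq_sqrt (hQpos r).le]
  · refine ⟨fun r => 2 * m * (4
        + 2 * (m - 1) * Real.cos (2 * r)
            / ((Real.cos r) ^ 2 * ((Real.sin r) ^ 2 + k ^ 2 * (Real.cos r) ^ 2))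
        + 2 * (m - 1) * (Real.sin r) ^ 2
            / ((Real.cos r) ^ 2 * ((Real.sin r) ^ 2 + k ^ 2 * (Real.cos r) ^ 2) ^ 2)), ?_, ?_⟩
    · have hden : ∀ x ∈ Set.Ioo (0:ℝ) (Real.pi/2),
          (Real.cos x) ^ 2 * ((Real.sin x) ^ 2 + k ^ 2 * (Real.cos x) ^ 2) ≠ 0 := by
        intro x hx
        have hc : 0 < Real.cos x := Real.cos_pos_of_mem_Ioo ⟨by linarith [Real.pi_pos, hx.1], hx.2⟩
        exact (mul_pos (pow_pos hc 2) (hQpos x)).ne'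
      apply ContDiffOn.mul contDiffOn_const
      apply ContDiffOn.add
      apply ContDiffOn.add contDiffOn_const
      · exact ContDiffOn.div
          (ContDiff.contDiffOn (contDiff_const.mul (Real.contDiff_cos.comp (contDiff_const.mul contDiff_id))))
          (ContDiff.contDiffOn ((Real.contDiff_cos.pow 2).mul ((Real.contDiff_sin.pow 2).add
            (contDiff_const.mul (Real.contDiff_cos.pow 2))))) hden
      · refine ContDiffOn.div
          (ContDiff.contDiffOn (contDiff_const.mul (Real.contDiff_sin.pow 2)))
          (ContDiff.contDiffOn ((Real.contDiff_cos.pow 2).mul (((Real.contDiff_sin.pow 2).add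
            (contDiff_const.mul (Real.contDiff_cos.pow 2))).pow 2))) ?_
        intro x hx
        have hc : 0 < Real.cos x := Real.cos_pos_of_mem_Ioo ⟨by linarith [Real.pi_pos, hx.1], hx.2⟩
        exact (mul_pos (pow_pos hc 2) (pow_pos (hQpos x) 2)).ne'
    · intro r hr
      obtain ⟨hr0, hr1⟩ := hr
      have hcpos : 0 < Real.cos r := Real.cos_pos_of_mem_Ioo ⟨by linarith [Real.pi_pos], hr1⟩
      have hspos : 0 < Real.sin r := Real.sin_pos_of_pos_of_lt_pi hr0 (by linarith [Real.pi_pos])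
      have u2 := hu2 r
      have une := (hupos r).ne'
      have hQr := hQne r
      have hcne := hcpos.ne'
      have hsne := hspos.ne'
      have hsq2 : (h r) ^ 2 = (Real.cos r) ^ 2 * ((Real.sin r) ^ 2 + k ^ 2 * (Real.cos r) ^ 2) := by
        rw [hh]; dsimp only; rw [mul_pow, Real.sq_sqrt (hQpos r).le]
      have hsq4 : (h r) ^ 4 = ((Real.cos r) ^ 2 * ((Real.sin r) ^ 2 + k ^ 2 * (Real.cos r) ^ 2)) ^ 2 := by
        rw [show (h r) ^ 4 = ((h r) ^ 2) ^ 2 by ring, hsq2]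
      constructor
      · rw [hfd2 r, hdf, hf, hsq2, hsq4]
        dsimp only
        rw [Real.sin_two_mul]
        field_simp
        ring_nf
      · rw [hhd2 r, hdh, hdf, hf, hsq4, hsq2, hh]
        dsimp only
        rw [Real.sin_two_mul, Real.cos_two_mul']
        set u := Real.sqrt ((Real.sin r) ^ 2 + k ^ 2 * (Real.cos r) ^ 2) with hudef
        field_simp
        ring_nf
        linear_combination ((2)*(Real.cos r)^2*u^2*k^2*m + (2)*(Real.cos r)^4*k^4*m + (2)*(Real.cos r)^4*u^2*k^2 + (-2)*(Real.cos r)^4*u^2*k^2*m + (2)*(Real.cos r)^6*k^4 + (-2)*(Real.cos r)^6*k^4*m + (-4)*(Real.cos r)^6*u^2*k^4 + (-1)*(Real.cos r)^8*k^4 + (-2)*(Real.cos r)^8*k^6 + (2)*(Real.sin r)^2*(Real.cos r)^2*k^2*m + (2)*(Real.sin r)^2*(Real.cos r)^2*u^2 + (-2)*(Real.sin r)^2*(Real.cos r)^2*u^2*m + (-2)*(Real.sin r)^2*(Real.cos r)^2*u^2*k^2 + (2)*(Real.sin r)^2*(Real.cos r)^2*u^2*k^2*m + (4)*(Real.sin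 r)^2*(Real.cos r)^4*k^2 + (-4)*(Real.sin r)^2*(Real.cos r)^4*k^2*m + (-2)*(Real.sin r)^2*(Real.cos r)^4*k^4 + (2)*(Real.sin r)^2*(Real.cos r)^4*k^4*m + (-8)*(Real.sin r)^2*(Real.cos r)^4*u^2*k^2 + (-2)*(Real.sin r)^2*(Real.cos r)^6*k^2 + (-6)*(Real.sin r)^2*(Real.cos r)^6*k^4 + (-2)*(Real.sin r)^2*(Real.cos r)^6*k^6 + (-2)*(Real.sin r)^4*u^2 + (2)*(Real.sin r)^4*u^2*m + (2)*(Real.sin r)^4*(Real.cos r)^2 + (-2)*(Real.sin r)^4*(Real.cos r)^2*m + (-4)*(Real.sin r)^4*(Real.cos r)^2*k^2 + (4)*(Real.sin r)^4*(Real.cos r)^2*k^2*m + (-4)*(Real.sin r)^4*(Real.cos r)^2*u^2 + (-1)*(Real.sin r)^4*(Real.cos r)^4 + (-6)*(Real.sin r)^4*(Real.cos r)^4*k^2 + (-5)*(Real.sin r)^4*(Real.cos r)^4*k^4 + (-2)*(Real.sin r)^6 + (2)*(Real.sin r)^6*m + (-2)*(Real.sin r)^6*(Real.cos r)^2 + (-4)*(Real.sin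 r)^6*(Real.cos r)^2*k^2 + (-1)*(Real.sin r)^8) * u2 + ((-2)*(Real.cos r)^6*k^6*m + (-2)*(Real.cos r)^8*k^6 + (-4)*(Real.sin r)^2*(Real.cos r)^4*k^4*m + (-4)*(Real.sin r)^2*(Real.cos r)^6*k^4 + (-2)*(Real.sin r)^2*(Real.cos r)^6*k^6 + (-2)*(Real.sin r)^4*(Real.cos r)^2*k^2*m + (-2)*(Real.sin r)^4*(Real.cos r)^4*k^2 + (-4)*(Real.sin r)^4*(Real.cos r)^4*k^4 + (-2)*(Real.sin r)^6*(Real.cos r)^2*k^2) * Real.sin_sq_add_cos_sq r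
end

section
/- Let m ≥ 2 and let f, h : I → ℝ be smooth positive functions. Define the Lee-form quantity Θ(r) = f(r)·(h(r)h'(r) + (mn/p)·f(r)). If there exists r₀ ∈ I with Θ(r₀) = 0 and f, h satisfy the Vaisman system f·(d/dr)Θ̃ - f'·Θ̃ = 0, f'·Θ̃ = 0, and h h'·Θ̃ = 0 on I (where Θ̃(r) = (4m(m-1)n/(λp))·Θ(r)/h(r)², λ = √(2m/(m-1))), then Θ̃ ≡ 0 on I. Conversely, if Θ̃ is nowhere vanishing and the Vaisman system holds, then f and h are constant. -/
lemma const_on_aux (I : Set ℝ) (hIo : IsOpen I) (hIc : Convex ℝ I) (g : ℝ → ℝ)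
    (hg : ∀ r ∈ I, HasDerivAt g 0 r) : ∀ x ∈ I, ∀ y ∈ I, g x = g y := by
  intro x hx y hy
  have hdiff : DifferentiableOn ℝ g I := fun r hr =>
    ((hg r hr).differentiableAt).differentiableWithinAt
  apply hIc.is_const_of_fderivWithin_eq_zero hdiff _ hx hy
  intro r hr
  have h0 := (hg r hr).hasFDerivAt.fderiv
  rw [fderivWithin_of_isOpen hIo hr, h0]
  ext
  simp

/-- Vaisman alternative for the Lee form of `g(f,h)` on `M_{(3,n)}(G,K)`: if the Vaisman
system holds, then either the Lee quantity `Θ̃` vanishes identically (as soon as it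
vanishes somewhere), or `f` and `h` are constant. -/
theorem stmt_19 (m n p : ℝ) (hm : 2 ≤ m) (hn : 0 < n) (hp : 0 < p)
    (I : Set ℝ) (hIopen : IsOpen I) (hIconv : Convex ℝ I)
    (f h : ℝ → ℝ) (hf : ContDiff ℝ (⊤ : ℕ∞) f) (hh : ContDiff ℝ (⊤ : ℕ∞) h)
    (hfpos : ∀ r ∈ I, 0 < f r) (hhpos : ∀ r ∈ I, 0 < h r)
    (lam : ℝ) (hlam : lam = Real.sqrt (2 * m / (m - 1)))
    (Θ : ℝ → ℝ)
    (hΘ : Θ = fun r => (4 * m * (m - 1) * n / (lam * p))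
        * (f r * (h r * deriv h r + (m * n / p) * f r)) / (h r) ^ 2)
    (hVaisman : ∀ r ∈ I,
      f r * deriv Θ r - deriv f r * Θ r = 0 ∧
      deriv f r * Θ r = 0 ∧
      h r * deriv h r * Θ r = 0) :
    ((∃ r₀ ∈ I, Θ r₀ = 0) → ∀ r ∈ I, Θ r = 0) ∧
    ((∀ r ∈ I, Θ r ≠ 0) →
      ∃ cf ch : ℝ, ∀ r ∈ I, f r = cf ∧ h r = ch) := by
  have hfd : Differentiable ℝ f := hf.differentiable (by simp)
  have hhd : Differentiable ℝ h := hh.differentiable (by simp)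
  have hh'd : Differentiable ℝ (deriv h) := by
    exact (contDiff_infty_iff_deriv.mp (hh.of_le (by simp))).2.differentiable (by simp)
  constructor
  · rintro ⟨r₀, hr₀, hΘ0⟩ r hr
    -- Θ is differentiable on I with derivative 0
    have hder : ∀ s ∈ I, HasDerivAt Θ (0 : ℝ) s := by
      intro s hs
      have hhs : h s ≠ 0 := (hhpos s hs).ne'
      have hdΘ : DifferentiableAt ℝ Θ s := by
        rw [hΘ]
        exact DifferentiableAt.div
          (((hfd s).mul ((((hhd s).mul (hh'd s)).add
            ((differentiableAt_const _).mul (hfd s))))).const_mul _)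
          ((hhd s).pow 2) (pow_ne_zero 2 hhs)
      obtain ⟨h1, h2, h3⟩ := hVaisman s hs
      have hd0 : deriv Θ s = 0 := by
        have hfs := (hfpos s hs).ne'
        have : f s * deriv Θ s = 0 := by linarith
        exact (mul_eq_zero.mp this).resolve_left hfs
      have := hdΘ.hasDerivAt
      rwa [hd0] at this
    have := const_on_aux I hIopen hIconv Θ hder r hr r₀ hr₀
    rw [this, hΘ0]
  · intro hne
    rcases Set.eq_empty_or_nonempty I with hI | ⟨r₀, hr₀⟩
    · exact ⟨0, 0, by simp [hI]⟩
    have hfder : ∀ s ∈ I, HasDerivAt f (0 : ℝ) s := by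
      intro s hs
      obtain ⟨_, h2, _⟩ := hVaisman s hs
      have : deriv f s = 0 := (mul_eq_zero.mp h2).resolve_right (hne s hs)
      have hd := (hfd s).hasDerivAt
      rwa [this] at hd
    have hhder : ∀ s ∈ I, HasDerivAt h (0 : ℝ) s := by
      intro s hs
      obtain ⟨_, _, h3⟩ := hVaisman s hs
      have h4 : h s * deriv h s = 0 := (mul_eq_zero.mp h3).resolve_right (hne s hs)
      have : deriv h s = 0 := (mul_eq_zero.mp h4).resolve_left (hhpos s hs).ne'
      have hd := (hhd s).hasDerivAt
      rwa [this] at hd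
    refine ⟨f r₀, h r₀, fun r hr => ⟨?_, ?_⟩⟩
    · exact const_on_aux I hIopen hIconv f hfder r hr r₀ hr₀
    · exact const_on_aux I hIopen hIconv h hhder r hr r₀ hr₀
end
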